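/- Two words are Baxter-equivalent if and only if they are both sylvester-equivalent and #-sylvester-equivalent: for u, v ∈ A*, u ≡_B v iff u ≡_S v and u ≡_{S#} v. -/

import Mathlib

open scoped Classical

/-- Baxter adjacency relations on words over the alphabet of natural numbers. -/
def BaxterAdj (w w' : List ℕ) : Prop :=
  (∃ (a b c d : ℕ) (u v : List ℕ), a ≤ b ∧ b < c ∧ c ≤ d ∧
      w = c :: (u ++ a :: d :: (v ++ [b])) ∧ w' = c :: (u ++ d :: a :: (v ++ [b]))) ∨
  (∃ (a b c d : ℕ) (u v : List ℕ), a < b ∧ b ≤ c ∧ c < d ∧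
      w = b :: (u ++ d :: a :: (v ++ [c])) ∧ w' = b :: (u ++ a :: d :: (v ++ [c])))

/-- One rewriting step: an adjacency applied inside a word (congruence context). -/
def BaxterStep (w w' : List ℕ) : Prop :=
  ∃ (p s u v : List ℕ), BaxterAdj u v ∧ w = p ++ u ++ s ∧ w' = p ++ v ++ s

/-- The Baxter congruence: the equivalence generated by the Baxter steps. -/
def BaxterEquiv : List ℕ → List ℕ → Prop := Relation.EqvGen BaxterStep

/-- Sylvester adjacency: a c u b ≡ c a u b when a ≤ b < c. -/
def SylvAdj (w w' : List ℕ) : Prop :=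
  ∃ (a b c : ℕ) (u : List ℕ), a ≤ b ∧ b < c ∧
    w = a :: c :: (u ++ [b]) ∧ w' = c :: a :: (u ++ [b])

def SylvStep (w w' : List ℕ) : Prop :=
  ∃ (p s u v : List ℕ), SylvAdj u v ∧ w = p ++ u ++ s ∧ w' = p ++ v ++ s

def SylvEquiv : List ℕ → List ℕ → Prop := Relation.EqvGen SylvStep

/-- #-sylvester adjacency: b u a c ≡ b u c a when a < b ≤ c. -/
def SylvHAdj (w w' : List ℕ) : Prop :=
  ∃ (a b c : ℕ) (u : List ℕ), a < b ∧ b ≤ c ∧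
    w = b :: (u ++ [a, c]) ∧ w' = b :: (u ++ [c, a])

def SylvHStep (w w' : List ℕ) : Prop :=
  ∃ (p s u v : List ℕ), SylvHAdj u v ∧ w = p ++ u ++ s ∧ w' = p ++ v ++ s

def SylvHEquiv : List ℕ → List ℕ → Prop := Relation.EqvGen SylvHStep

/-- The standardized word of `u`: position `i` receives the rank of the letter `u i`
(ties broken from left to right), ranks starting at `1`. -/
def std (u : List ℕ) : List ℕ :=
  (List.range u.length).map fun i =>
    ((List.range u.length).filter fun j =>
      decide (u.getD j 0 < u.getD i 0 ∨ (u.getD j 0 = u.getD i 0 ∧ j < i))).length + 1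

/-- The maximal letter of a word. -/
def wordMax (u : List ℕ) : ℕ := u.foldr max 0

/-- The Schützenberger transformation: reverse and complement each letter w.r.t. max + 1. -/
def schutz (u : List ℕ) : List ℕ := u.reverse.map fun x => wordMax u + 1 - x

/-- Labeled binary trees. -/
inductive BT where
  | leaf : BT
  | node : BT → ℕ → BT → BT
deriving DecidableEq

/-- Leaf insertion into a left binary search tree. -/
def leafInsL : BT → ℕ → BT
  | .leaf, a => .node .leaf a .leaf
  | .node l b r, a => if a < b then .node (leafInsL l a) b r else .node l b (leafInsL r a)

/-- Leaf insertion into a right binary search tree. -/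
def leafInsR : BT → ℕ → BT
  | .leaf, a => .node .leaf a .leaf
  | .node l b r, a => if a ≤ b then .node (leafInsR l a) b r else .node l b (leafInsR r a)

/-- The lower restricted tree `T_{≤ a}` of a right binary search tree. -/
def splitLE : BT → ℕ → BT
  | .leaf, _ => .leaf
  | .node l b r, a => if b ≤ a then .node l b (splitLE r a) else splitLE l a

/-- The higher restricted tree `T_{> a}` of a right binary search tree. -/
def splitGT : BT → ℕ → BT
  | .leaf, _ => .leaf
  | .node l b r, a => if b ≤ a then splitGT r a else .node (splitGT l a) b r

/-- Root insertion into a right binary search tree. -/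
def rootIns (t : BT) (a : ℕ) : BT := .node (splitLE t a) a (splitGT t a)

/-- The left tree of the P-symbol: leaf insertions from left to right. -/
def insL (u : List ℕ) : BT := u.foldl leafInsL .leaf

/-- The right tree of the P-symbol: root insertions from left to right. -/
def insR (u : List ℕ) : BT := u.foldl rootIns .leaf

/-- The P-symbol of a word. -/
def Psymb (u : List ℕ) : BT × BT := (insL u, insR u)

/-- Unlabeled binary trees. -/
inductive UBT where
  | leaf : UBT
  | node : UBT → UBT → UBT
deriving DecidableEq

/-- The shape of a labeled binary tree. -/
def shape : BT → UBT
  | .leaf => .leaf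
  | .node l _ r => .node (shape l) (shape r)

/-- The shape of the P-symbol of a word. -/
def Pshape (u : List ℕ) : UBT × UBT := (shape (insL u), shape (insR u))

/-- Number of internal nodes. -/
def sizeU : UBT → ℕ
  | .leaf => 0
  | .node l r => sizeU l + sizeU r + 1

/-- Orientations of the leaves, from left to right: `true` means right-oriented
(the leaf is the right child of its parent); the parameter is the orientation
assigned if the tree is reduced to a leaf. -/
def loU : UBT → Bool → List Bool
  | .leaf, b => [b]
  | .node l r, _ => loU l false ++ loU r true

/-- Leaf orientations of a labeled binary tree. -/
def loB : BT → Bool → List Bool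
  | .leaf, b => [b]
  | .node l _ r, _ => loB l false ++ loB r true

/-- The canopy: orientations of the leaves except the first and the last one. -/
def canU (t : UBT) : List Bool := ((loU t false).drop 1).dropLast

/-- A pair of twin binary trees: same number of nodes and complementary canopies. -/
def IsTwin (J : UBT × UBT) : Prop :=
  sizeU J.1 = sizeU J.2 ∧ (canU J.1).length = (canU J.2).length ∧
    ∀ i < (canU J.1).length, (canU J.1).getD i false ≠ (canU J.2).getD i false

/-- `σ` is (the word of) a permutation of `{1, …, n}`. -/
def IsPerm (n : ℕ) (σ : List ℕ) : Prop := σ.Perm (List.range' 1 n)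

/-- Covering-type step of the right permutohedron (weak) order: exchange of two
adjacent letters `a < b`. -/
def PermutoStep (σ ν : List ℕ) : Prop :=
  ∃ (p s : List ℕ) (a b : ℕ), a < b ∧ σ = p ++ a :: b :: s ∧ ν = p ++ b :: a :: s

/-- The right permutohedron (weak) order. -/
def PermutoLe : List ℕ → List ℕ → Prop := Relation.ReflTransGen PermutoStep

/-- Baxter permutations: avoiding the generalized patterns 2-41-3 and 3-14-2. -/
def IsBaxterPerm (σ : List ℕ) : Prop :=
  ∀ i j k, i < j → j + 1 < k → k < σ.length →
    ¬(σ.getD (j+1) 0 < σ.getD i 0 ∧ σ.getD i 0 < σ.getD k 0 ∧ σ.getD k 0 < σ.getD j 0) ∧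
    ¬(σ.getD j 0 < σ.getD k 0 ∧ σ.getD k 0 < σ.getD i 0 ∧ σ.getD i 0 < σ.getD (j+1) 0)


/-!
A Baxter move is at once a sylvester move and a #-sylvester move. Conversely, #-sylvester
equivalent words have the same binary search tree when their letters are inserted as leaves from
left to right (`sylvHTree`), and sylvester equivalent words when they are inserted from right to
left (`sylvTree`): each defining relation exchanges two letters that an earlier inserted letter
has already sent to different subtrees. Suppose two words have the same two trees. Let `x` be
the first letter of the first word and `q` the part of the second word before its first `x`.
Each `z ∈ q` is separated from `x` in both trees, which yields a label `m'` before `q` and a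
label `m` after `x` with `min x z < m' ≤ max x z` and `min x z ≤ m < max x z`: exactly what a
Baxter move needs to exchange `z` and `x`. Hence `x` moves to the front of the second word by
Baxter moves, and induction on the length finishes the proof.
-/

namespace BT

def labels : BT → Multiset ℕ
  | leaf => 0
  | node l b t => b ::ₘ (labels l + labels t)

variable (r : ℕ → ℕ → Prop)

/-- `x` and `z` reach different leaves of `t` when inserted in it, a letter `a` going left at a
node `b` iff `r a b`. -/
inductive Separates : BT → ℕ → ℕ → Prop
  | root {l b t x z} : ¬(r x b ↔ r z b) → Separates (node l b t) x z
  | left {l b t x z} : r x b → r z b → Separates l x z → Separates (node l b t) x z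
  | right {l b t x z} : ¬r x b → ¬r z b → Separates t x z → Separates (node l b t) x z

variable {r} in
theorem Separates.exists_mem_labels {t : BT} {x z : ℕ} (h : Separates r t x z) :
    ∃ m ∈ t.labels, ¬(r x m ↔ r z m) := by
  induction h with
  | root h => exact ⟨_, Multiset.mem_cons_self _ _, h⟩
  | left _ _ _ ih | right _ _ _ ih =>
    obtain ⟨m, hm, h⟩ := ih
    exact ⟨m, by simp [labels, hm], h⟩

variable [DecidableRel r]

/-- Leaf insertion; `leafInsL` and `leafInsR` are `leafIns (· < ·)` and `leafIns (· ≤ ·)`. -/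
def leafIns : BT → ℕ → BT
  | leaf, a => node leaf a leaf
  | node l b t, a => if r a b then node (leafIns l a) b t else node l b (leafIns t a)

variable {r}

theorem leafIns_node (l : BT) (b : ℕ) (t : BT) (a : ℕ) :
    leafIns r (node l b t) a =
      if r a b then node (leafIns r l a) b t else node l b (leafIns r t a) := rfl

@[simp]
theorem labels_leafIns (t : BT) (a : ℕ) : (leafIns r t a).labels = a ::ₘ t.labels := by
  induction t with
  | leaf => rfl
  | node l b t ihl iht =>
    rw [leafIns_node]
    split_ifs <;> simp [labels, ihl, iht, Multiset.cons_swap a b]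

@[simp]
theorem labels_foldl_leafIns (t : BT) (w : List ℕ) :
    (w.foldl (leafIns r) t).labels = t.labels + w := by
  induction w generalizing t with
  | nil => simp
  | cons a w ih => simp [ih, ← Multiset.cons_coe, Multiset.add_cons]

theorem leafIns_ne_leaf (t : BT) (a : ℕ) : leafIns r t a ≠ leaf := by
  cases t
  · simp [leafIns]
  · rw [leafIns_node]; split_ifs <;> simp

theorem leafIns_injective (a : ℕ) : Function.Injective (leafIns r · a) := by
  intro t
  induction t with
  | leaf =>
    rintro (_ | ⟨l, b, t⟩) h
    · rfl
    · simp only [leafIns] at h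
      split_ifs at h <;> simp [(leafIns_ne_leaf _ _).symm] at h
  | node l b t ihl iht =>
    rintro (_ | ⟨l', b', t'⟩) h
    · simp only [leafIns] at h
      split_ifs at h <;> simp [leafIns_ne_leaf] at h
    · simp only [leafIns_node] at h
      split_ifs at h <;> simp only [node.injEq] at h
      · obtain ⟨h1, rfl, rfl⟩ := h; rw [ihl h1]
      · obtain ⟨-, rfl, -⟩ := h; contradiction
      · obtain ⟨-, rfl, -⟩ := h; contradiction
      · obtain ⟨rfl, rfl, h3⟩ := h; rw [iht h3]

theorem foldl_leafIns_node (l : BT) (b : ℕ) (t : BT) (w : List ℕ) :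
    w.foldl (leafIns r) (node l b t) =
      node ((w.filter (r · b)).foldl (leafIns r) l) b
        ((w.filter (¬r · b)).foldl (leafIns r) t) := by
  induction w generalizing l t with
  | nil => rfl
  | cons a w ih => by_cases h : r a b <;> simp [leafIns_node, h, ih]

theorem Separates.leafIns_comm {t : BT} {x z : ℕ} (h : Separates r t x z) :
    leafIns r (leafIns r t x) z = leafIns r (leafIns r t z) x := by
  induction h with
  | @root _ b _ x _ h => by_cases hx : r x b <;> simp_all [leafIns_node]
  | left hx hz _ ih | right hx hz _ ih => simp [leafIns_node, hx, hz, ih]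

theorem Separates.leafIns {t : BT} {x z : ℕ} (h : Separates r t x z) (a : ℕ) :
    Separates r (leafIns r t a) x z := by
  induction h with
  | root h => rw [leafIns_node]; split_ifs <;> exact .root h
  | left hx hz _ ih => rw [leafIns_node]; split_ifs <;> simp_all [Separates.left]
  | right hx hz _ ih => rw [leafIns_node]; split_ifs <;> simp_all [Separates.right]

theorem Separates.foldl {t : BT} {x z : ℕ} (h : Separates r t x z) (w : List ℕ) :
    Separates r (w.foldl (BT.leafIns r) t) x z := by
  induction w generalizing t with
  | nil => exact h
  | cons a w ih => exact ih (h.leafIns a)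

theorem separates_leafIns (htrans : ∀ ⦃a b c⦄, r a b → r b c → r a c)
    (hco : ∀ ⦃a b c⦄, ¬r a b → ¬r b c → ¬r a c)
    {a b c : ℕ} (hab : r a b) (hcb : ¬r c b) (t : BT) : Separates r (leafIns r t b) a c := by
  induction t with
  | leaf => exact .root (by simp [hab, hcb])
  | node l d t ihl iht =>
    rw [leafIns_node]
    split_ifs with hbd
    · have had := htrans hab hbd
      by_cases hcd : r c d
      · exact .left had hcd ihl
      · exact .root (by simp [had, hcd])
    · have hcd : ¬r c d := hco hcb hbd
      by_cases had : r a d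
      · exact .root (by simp [had, hcd])
      · exact .right had hcd iht

theorem foldl_leafIns_swap (htrans : ∀ ⦃a b c⦄, r a b → r b c → r a c)
    (hco : ∀ ⦃a b c⦄, ¬r a b → ¬r b c → ¬r a c)
    {a b c : ℕ} (hab : r a b) (hcb : ¬r c b) (t : BT) (u : List ℕ) :
    (b :: (u ++ [a, c])).foldl (leafIns r) t = (b :: (u ++ [c, a])).foldl (leafIns r) t := by
  simpa using ((separates_leafIns htrans hco hab hcb t).foldl u).leafIns_comm

theorem foldl_leafIns_cons_eq_concat {t : BT} {x : ℕ} {q : List ℕ}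
    (h : ∀ z ∈ q, Separates r t x z) :
    (x :: q).foldl (leafIns r) t = (q ++ [x]).foldl (leafIns r) t := by
  induction q generalizing t with
  | nil => rfl
  | cons z q ih =>
    have hz := h z List.mem_cons_self
    simp only [List.foldl_cons, List.cons_append, hz.leafIns_comm] at ih ⊢
    exact ih fun y hy => (h y (List.mem_cons_of_mem z hy)).leafIns z

/-- If `x` and `z` reached the same leaf of `t`, the node created there would be labelled `x` on
the left-hand side and by a letter of `q` on the right-hand side. -/
theorem separates_of_foldl_eq {t : BT} {x z : ℕ} {q A B : List ℕ} (hx : x ∉ q) (hz : z ∈ q)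
    (h : (x :: A).foldl (leafIns r) t = (q ++ B).foldl (leafIns r) t) : Separates r t x z := by
  induction t generalizing q A B with
  | leaf =>
    obtain ⟨a, q, rfl⟩ := List.exists_cons_of_ne_nil (List.ne_nil_of_mem hz)
    simp only [List.foldl_cons, List.cons_append, leafIns, foldl_leafIns_node, node.injEq] at h
    exact (hx (h.2.1 ▸ List.mem_cons_self)).elim
  | node l b t ihl iht =>
    rw [List.foldl_cons, leafIns_node] at h
    split_ifs at h with hxb <;>
      simp only [foldl_leafIns_node, node.injEq, List.filter_append] at h
    · by_cases hzb : r z b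
      · exact .left hxb hzb <| ihl (fun hm => hx (List.mem_of_mem_filter hm))
          (List.mem_filter.2 ⟨hz, by simpa using hzb⟩) h.1
      · exact .root (by simp [hxb, hzb])
    · by_cases hzb : r z b
      · exact .root (by simp [hxb, hzb])
      · exact .right hxb hzb <| iht (fun hm => hx (List.mem_of_mem_filter hm))
          (List.mem_filter.2 ⟨hz, by simpa using hzb⟩) h.2.2

theorem labels_left_eq_iff_labels_right_eq {l t l' t' : BT} {b : ℕ} {q : List ℕ}
    (h : (node l' b t').labels = (node l b t).labels + q) :
    l'.labels = l.labels + ↑(q.filter (r · b)) ↔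
      t'.labels = t.labels + ↑(q.filter (¬r · b)) := by
  have hq : (q : Multiset ℕ) = ↑(q.filter (r · b)) + ↑(q.filter (¬r · b)) := by
    simp only [← Multiset.filter_coe, Multiset.filter_add_not]
  simp only [labels, Multiset.cons_add, Multiset.cons_inj_right] at h
  rw [hq] at h
  constructor <;> intro h' <;> rw [h'] at h
  · exact add_left_cancel (a := l.labels + ↑(q.filter (r · b))) (by rw [h]; abel)
  · exact add_right_cancel (b := t.labels + ↑(q.filter (¬r · b))) (by rw [h]; abel)

/-- At the leaf of `t` reached by both `x` and `z`, the right-hand side puts `x`, while the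
left-hand side keeps there a node of `t'`, labelled by a letter of `q`. -/
theorem separates_of_leafIns_eq {t t' : BT} {x z : ℕ} {q : List ℕ}
    (hlabels : t'.labels = t.labels + q) (hx : x ∉ q) (hz : z ∈ q)
    (h : leafIns r t' x = (x :: q).foldl (leafIns r) t) : Separates r t x z := by
  induction t generalizing t' q with
  | leaf =>
    cases t' with
    | leaf => simp [labels, eq_comm] at hlabels; simp [hlabels] at hz
    | node l' b' t' =>
      have hb' : b' = x := by
        rw [leafIns_node] at h
        split_ifs at h <;> simp [leafIns, foldl_leafIns_node] at h <;> exact h.2.1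
      exact absurd (by simpa [labels, hb'] using congrArg (b' ∈ ·) hlabels) hx
  | node l b t ihl iht =>
    cases t' with
    | leaf => simp [labels] at hlabels
    | node l' b' t' =>
      simp only [List.foldl_cons, leafIns_node] at h
      split_ifs at h with hxb' hxb hxb <;>
        simp only [foldl_leafIns_node, node.injEq] at h <;> obtain ⟨hl, rfl, ht⟩ := h
      · have hlabels' := (labels_left_eq_iff_labels_right_eq (r := r) hlabels).2 (by simp [ht])
        by_cases hzb : r z b'
        · exact .left hxb hzb <| ihl hlabels' (fun hm => hx (List.mem_of_mem_filter hm))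
            (List.mem_filter.2 ⟨hz, by simpa using hzb⟩) hl
        · exact .root (by simp [hxb, hzb])
      · contradiction
      · contradiction
      · have hlabels' := (labels_left_eq_iff_labels_right_eq (r := r) hlabels).1 (by simp [hl])
        by_cases hzb : r z b'
        · exact .root (by simp [hxb, hzb])
        · exact .right hxb hzb <| iht hlabels' (fun hm => hx (List.mem_of_mem_filter hm))
            (List.mem_filter.2 ⟨hz, by simpa using hzb⟩) ht

end BT

open BT

def sylvHTree (w : List ℕ) : BT := w.foldl (leafIns (· < ·)) .leaf

def sylvTree (w : List ℕ) : BT := w.reverse.foldl (leafIns (· ≤ ·)) .leaf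

theorem sylvHTree_append (u v : List ℕ) :
    sylvHTree (u ++ v) = v.foldl (leafIns (· < ·)) (sylvHTree u) :=
  List.foldl_append ..

theorem sylvTree_append (u v : List ℕ) :
    sylvTree (u ++ v) = u.reverse.foldl (leafIns (· ≤ ·)) (sylvTree v) := by
  rw [sylvTree, List.reverse_append, List.foldl_append, sylvTree]

theorem sylvTree_cons (x : ℕ) (w : List ℕ) :
    sylvTree (x :: w) = leafIns (· ≤ ·) (sylvTree w) x :=
  sylvTree_append [x] w

@[simp]
theorem labels_sylvHTree (w : List ℕ) : (sylvHTree w).labels = w := by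
  simp [sylvHTree, labels]

@[simp]
theorem labels_sylvTree (w : List ℕ) : (sylvTree w).labels = w := by
  rw [sylvTree, labels_foldl_leafIns]
  simp [labels]

theorem SylvHStep.sylvHTree_eq {u v : List ℕ} (h : SylvHStep u v) :
    sylvHTree u = sylvHTree v := by
  obtain ⟨p, s, _, _, ⟨a, b, c, w, hab, hbc, rfl, rfl⟩, rfl, rfl⟩ := h
  have := foldl_leafIns_swap (r := (· < ·)) (fun _ _ _ => Nat.lt_trans)
    (fun _ _ _ _ _ => by omega) hab (by omega : ¬c < b) (sylvHTree p) w
  rw [sylvHTree_append, sylvHTree_append, sylvHTree_append, sylvHTree_append, this]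

theorem SylvStep.sylvTree_eq {u v : List ℕ} (h : SylvStep u v) : sylvTree u = sylvTree v := by
  obtain ⟨p, s, _, _, ⟨a, b, c, w, hab, hbc, rfl, rfl⟩, rfl, rfl⟩ := h
  have := foldl_leafIns_swap (r := (· ≤ ·)) (fun _ _ _ => Nat.le_trans)
    (fun _ _ _ _ _ => by omega) hab (by omega : ¬c ≤ b) (sylvTree s) w.reverse
  rw [sylvTree_append, sylvTree_append, List.reverse_append, List.reverse_append,
    List.foldl_append, List.foldl_append]
  congr 1
  simpa using this.symm

theorem SylvHEquiv.sylvHTree_eq {u v : List ℕ} (h : SylvHEquiv u v) :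
    sylvHTree u = sylvHTree v :=
  congrArg (Quot.lift sylvHTree fun _ _ => SylvHStep.sylvHTree_eq) (Quot.eqvGen_sound h)

theorem SylvEquiv.sylvTree_eq {u v : List ℕ} (h : SylvEquiv u v) : sylvTree u = sylvTree v :=
  congrArg (Quot.lift sylvTree fun _ _ => SylvStep.sylvTree_eq) (Quot.eqvGen_sound h)

open Relation

theorem BaxterStep.symmGen_sylvStep {u v : List ℕ} (h : BaxterStep u v) :
    SymmGen SylvStep u v := by
  obtain ⟨p, s, _, _, ⟨a, b, c, d, u, v, hab, hbc, hcd, rfl, rfl⟩ |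
    ⟨a, b, c, d, u, v, hab, hbc, hcd, rfl, rfl⟩, rfl, rfl⟩ := h
  · exact .inl ⟨p ++ c :: u, s, _, _, ⟨a, b, d, v, hab, hbc.trans_le hcd, rfl, rfl⟩,
      by simp, by simp⟩
  · exact .inr ⟨p ++ b :: u, s, _, _, ⟨a, c, d, v, hab.le.trans hbc, hcd, rfl, rfl⟩,
      by simp, by simp⟩

theorem BaxterStep.symmGen_sylvHStep {u v : List ℕ} (h : BaxterStep u v) :
    SymmGen SylvHStep u v := by
  obtain ⟨p, s, _, _, ⟨a, b, c, d, u, v, hab, hbc, hcd, rfl, rfl⟩ |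
    ⟨a, b, c, d, u, v, hab, hbc, hcd, rfl, rfl⟩, rfl, rfl⟩ := h
  · exact .inl ⟨p, v ++ b :: s, _, _, ⟨a, c, d, u, hab.trans_lt hbc, hcd, rfl, rfl⟩,
      by simp, by simp⟩
  · exact .inr ⟨p, v ++ c :: s, _, _, ⟨a, b, d, u, hab, hbc.trans hcd.le, rfl, rfl⟩,
      by simp, by simp⟩

theorem BaxterEquiv.sylvEquiv {u v : List ℕ} (h : BaxterEquiv u v) : SylvEquiv u v := by
  rw [SylvEquiv, ← EqvGen.eqvGen_symmGen]
  exact EqvGen.mono (fun _ _ => BaxterStep.symmGen_sylvStep) _ _ h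

theorem BaxterEquiv.sylvHEquiv {u v : List ℕ} (h : BaxterEquiv u v) : SylvHEquiv u v := by
  rw [SylvHEquiv, ← EqvGen.eqvGen_symmGen]
  exact EqvGen.mono (fun _ _ => BaxterStep.symmGen_sylvHStep) _ _ h

theorem BaxterAdj.baxterEquiv {u v : List ℕ} (h : BaxterAdj u v) (p s : List ℕ) :
    BaxterEquiv (p ++ u ++ s) (p ++ v ++ s) :=
  .rel _ _ ⟨p, s, u, v, h, rfl, rfl⟩

theorem baxterEquiv_swap {x z m m' : ℕ} (hm' : ¬(x < m' ↔ z < m')) (hm : ¬(x ≤ m ↔ z ≤ m))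
    (P Q R S : List ℕ) :
    BaxterEquiv (P ++ m' :: (Q ++ z :: x :: (R ++ m :: S)))
      (P ++ m' :: (Q ++ x :: z :: (R ++ m :: S))) := by
  wlog hxz : x < z generalizing x z
  · exact .symm _ _ (this (iff_comm.not.1 hm') (iff_comm.not.1 hm) (by omega))
  rcases lt_or_ge m m' with hmm' | hm'm
  · have h : BaxterAdj (m' :: (Q ++ x :: z :: (R ++ [m])))
        (m' :: (Q ++ z :: x :: (R ++ [m]))) :=
      .inl ⟨x, m, m', z, Q, R, by omega, hmm', by omega, rfl, rfl⟩
    exact .symm _ _ (by simpa using h.baxterEquiv P S : BaxterEquiv _ _)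
  · have h : BaxterAdj (m' :: (Q ++ z :: x :: (R ++ [m])))
        (m' :: (Q ++ x :: z :: (R ++ [m]))) :=
      .inr ⟨x, m', m, z, Q, R, by omega, hm'm, by omega, rfl, rfl⟩
    simpa using h.baxterEquiv P S

theorem baxterEquiv_bubble (p : List ℕ) (x : ℕ) {q : List ℕ} (R : List ℕ)
    (hp : ∀ z ∈ q, ∃ m ∈ p, ¬(x < m ↔ z < m)) (hR : ∀ z ∈ q, ∃ m ∈ R, ¬(x ≤ m ↔ z ≤ m)) :
    BaxterEquiv (p ++ q ++ x :: R) (p ++ x :: (q ++ R)) := by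
  induction q using List.reverseRecOn generalizing R with
  | nil => simpa using .refl _
  | append_singleton q z ih =>
    obtain ⟨m', hm'p, hm'⟩ := hp z (by simp)
    obtain ⟨m, hmR, hm⟩ := hR z (by simp)
    obtain ⟨P, P', rfl⟩ := List.append_of_mem hm'p
    obtain ⟨R₁, R₂, rfl⟩ := List.append_of_mem hmR
    have hswap := baxterEquiv_swap hm' hm P (P' ++ q) R₁ R₂
    have ih := ih (z :: (R₁ ++ m :: R₂)) (fun y hy => hp y (by simp [hy]))
      (fun y hy => (hR y (by simp [hy])).imp fun _ h => ⟨List.mem_cons_of_mem z h.1, h.2⟩)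
    simp only [List.append_assoc, List.cons_append] at hswap ih ⊢
    exact .trans _ _ _ hswap ih

theorem sylvHTree_bubble {p w q r : List ℕ} {x : ℕ} (hxq : x ∉ q)
    (h : sylvHTree (p ++ x :: w) = sylvHTree (p ++ (q ++ x :: r))) :
    (∀ z ∈ q, ∃ m ∈ p, ¬(x < m ↔ z < m)) ∧
      sylvHTree (p ++ (q ++ x :: r)) = sylvHTree (p ++ x :: (q ++ r)) := by
  rw [sylvHTree_append, sylvHTree_append] at h
  have hsep z (hz : z ∈ q) : Separates (· < ·) (sylvHTree p) x z :=
    separates_of_foldl_eq hxq hz h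
  refine ⟨fun z hz => by simpa using (hsep z hz).exists_mem_labels, ?_⟩
  rw [List.append_cons q x r, ← List.cons_append, sylvHTree_append, sylvHTree_append,
    List.foldl_append (l := q ++ [x]), List.foldl_append (l := x :: q),
    foldl_leafIns_cons_eq_concat hsep]

theorem sylvTree_bubble {w q r s : List ℕ} {x : ℕ} (hxq : x ∉ q) (hw : w.Perm (q ++ r))
    (h : sylvTree (x :: w ++ s) = sylvTree (q ++ x :: r ++ s)) :
    (∀ z ∈ q, ∃ m ∈ r ++ s, ¬(x ≤ m ↔ z ≤ m)) ∧ sylvTree (w ++ s) = sylvTree (q ++ r ++ s) := by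
  have h' : leafIns (· ≤ ·) (sylvTree (w ++ s)) x =
      (x :: q.reverse).foldl (leafIns (· ≤ ·)) (sylvTree (r ++ s)) := by
    rwa [List.cons_append, List.append_assoc, List.cons_append, sylvTree_append q, sylvTree_cons,
      sylvTree_cons] at h
  have hlabels : (sylvTree (w ++ s)).labels = (sylvTree (r ++ s)).labels + q.reverse := by
    rw [labels_sylvTree, labels_sylvTree, Multiset.coe_reverse, Multiset.coe_add,
      Multiset.coe_eq_coe]
    exact (hw.append_right s).trans (by rw [List.append_assoc]; exact List.perm_append_comm)
  have hsep z (hz : z ∈ q.reverse) : Separates (· ≤ ·) (sylvTree (r ++ s)) x z :=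
    separates_of_leafIns_eq hlabels (by simpa using hxq) hz h'
  refine ⟨fun z hz => by simpa using (hsep z (by simpa using hz)).exists_mem_labels,
    leafIns_injective (r := (· ≤ ·)) x ?_⟩
  change leafIns _ _ x = leafIns _ _ x
  rw [h', foldl_leafIns_cons_eq_concat hsep, List.foldl_append, List.append_assoc,
    sylvTree_append q]
  rfl

theorem baxterEquiv_of_sylvHTree_eq_of_sylvTree_eq {p w w' s : List ℕ}
    (hH : sylvHTree (p ++ w) = sylvHTree (p ++ w')) (hS : sylvTree (w ++ s) = sylvTree (w' ++ s)) :
    BaxterEquiv (p ++ w ++ s) (p ++ w' ++ s) := by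
  induction w generalizing p w' with
  | nil =>
    have hperm : (p ++ []).Perm (p ++ w') := by simpa using congrArg labels hH
    obtain rfl := List.perm_nil.1 ((List.perm_append_left_iff p).1 hperm).symm
    exact .refl _
  | cons x w ih =>
    have hperm : (x :: w).Perm w' :=
      (List.perm_append_left_iff p).1 (by simpa using congrArg labels hH)
    obtain ⟨q, r, rfl, hxq⟩ := List.eq_append_cons_of_mem (hperm.subset List.mem_cons_self)
    have hw : w.Perm (q ++ r) := (hperm.trans List.perm_middle).cons_inv
    obtain ⟨hp, hH'⟩ := sylvHTree_bubble hxq hH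
    obtain ⟨hR, hS'⟩ := sylvTree_bubble hxq hw hS
    have hbubble := baxterEquiv_bubble p x (r ++ s) hp hR
    have ih := ih (p := p ++ [x]) (w' := q ++ r) (by simpa using hH.trans hH') hS'
    simp only [List.append_assoc, List.cons_append] at hbubble ih ⊢
    exact .trans _ _ _ ih (.symm _ _ hbubble)

/-- two words are Baxter-equivalent iff they are both
sylvester-equivalent and #-sylvester-equivalent. -/
theorem baxter_iff_sylvester_and_sylvesterSharp (u v : List ℕ) :
    BaxterEquiv u v ↔ (SylvEquiv u v ∧ SylvHEquiv u v) := by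
  refine ⟨fun h => ⟨h.sylvEquiv, h.sylvHEquiv⟩, fun ⟨hS, hH⟩ => ?_⟩
  simpa using baxterEquiv_of_sylvHTree_eq_of_sylvTree_eq (p := []) (s := [])
    (by simpa using hH.sylvHTree_eq) (by simpa using hS.sylvTree_eq)
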